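/- arXiv:1511.02615 — 5 statements merged into one kernel-verified Lean document; each statement's English description precedes it below -/
import Mathlib

section
/- Let (M, h, γ') be a monitor abstraction of a program P = (ℓI, E). Then for every path e₀,…,e_{n−1} of P and every execution v₀,…,v_n along it, there exist monitor locations m₀,…,m_n with m₀ the initial location of M such that for every 0 ≤ i < n: (mᵢ, τᵢ, m_{i+1}) is a transition of M, where τᵢ is the transition relation of eᵢ; h(mᵢ) equals the source location of eᵢ; h(m_{i+1}) equals the target location of eᵢ; and vᵢ ∈ γ'(mᵢ) for all 0 ≤ i ≤ n. In particular, every feasible path of P has the same sequence of transition relations as some path of M (the first half of Theorem 1: every feasible path of the program is a path of the abstract reachability graph). -/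
/-- A program: an initial location and a set of transitions `(ℓ, τ, ℓ')`. -/
structure Program (Loc Val : Type*) where
  init : Loc
  E : Set (Loc × (Val → Val → Prop) × Loc)

/-- `e 0, …, e (n-1)` is a path of `P`. -/
def IsPath {Loc Val : Type*} (P : Program Loc Val) (n : ℕ)
    (e : ℕ → Loc × (Val → Val → Prop) × Loc) : Prop :=
  (∀ i < n, e i ∈ P.E) ∧ (0 < n → (e 0).1 = P.init) ∧
    ∀ i, i + 1 < n → (e i).2.2 = (e (i + 1)).1

/-- `v 0, …, v n` is an execution along the transitions `e 0, …, e (n-1)`. -/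
def IsExec {Loc Val : Type*} (n : ℕ)
    (e : ℕ → Loc × (Val → Val → Prop) × Loc) (v : ℕ → Val) : Prop :=
  ∀ i < n, (e i).2.1 (v i) (v (i + 1))

/-- `(M, h, γ')` is a monitor abstraction of `P`. -/
def IsMonitorAbs {Loc Loc' Val : Type*} (P : Program Loc Val) (M : Program Loc' Val)
    (h : Loc' → Loc) (γ' : Loc' → Set Val) : Prop :=
  h M.init = P.init ∧ γ' M.init = Set.univ ∧
    ∀ (m : Loc') (τ : Val → Val → Prop) (ℓ' : Loc),
      (h m, τ, ℓ') ∈ P.E → ∀ v ∈ γ' m, ∀ v' : Val, τ v v' →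
        ∃ m' : Loc', (m, τ, m') ∈ M.E ∧ h m' = ℓ' ∧ v' ∈ γ' m'

/-- Every feasible path of the program is (simulated by) a path of the monitor. -/
theorem monitor_simulates_feasible_paths {Loc Loc' Val : Type*}
    (P : Program Loc Val) (M : Program Loc' Val)
    (h : Loc' → Loc) (γ' : Loc' → Set Val) (hmon : IsMonitorAbs P M h γ')
    (n : ℕ) (e : ℕ → Loc × (Val → Val → Prop) × Loc) (v : ℕ → Val)
    (hpath : IsPath P n e) (hexec : IsExec n e v) :
    ∃ m : ℕ → Loc', m 0 = M.init ∧
      (∀ i < n, (m i, (e i).2.1, m (i + 1)) ∈ M.E ∧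
        h (m i) = (e i).1 ∧ h (m (i + 1)) = (e i).2.2) ∧
      (∀ i ≤ n, v i ∈ γ' (m i)) ∧
      IsPath M n (fun i => (m i, (e i).2.1, m (i + 1))) := by
  classical
  obtain ⟨h0, hγ0, hstep⟩ := hmon
  have key : ∀ i, i < n → ∀ m : Loc', h m = (e i).1 → v i ∈ γ' m →
      ∃ m', (m, (e i).2.1, m') ∈ M.E ∧ h m' = (e i).2.2 ∧ v (i+1) ∈ γ' m' := by
    intro i hi m hm hv
    have he : (h m, (e i).2.1, (e i).2.2) ∈ P.E := by rw [hm]; exact hpath.1 i hi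
    exact hstep m _ _ he (v i) hv _ (hexec i hi)
  set m : ℕ → Loc' := fun i => Nat.rec M.init (fun i mi =>
    if hc : i < n ∧ h mi = (e i).1 ∧ v i ∈ γ' mi then
      Classical.choose (key i hc.1 mi hc.2.1 hc.2.2) else mi) i with hm
  have inv : ∀ i, i ≤ n → v i ∈ γ' (m i) ∧ (i < n → h (m i) = (e i).1) := by
    intro i
    induction i with
    | zero =>
      intro _
      refine ⟨by rw [hm]; simp [hγ0], fun h0' => ?_⟩
      rw [hm]; simpa [h0] using (hpath.2.1 h0').symm
    | succ i ih =>
      intro hi1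
      have hi : i < n := Nat.lt_of_succ_le hi1
      obtain ⟨hvγ, hhm⟩ := ih (le_of_lt hi)
      have hc : i < n ∧ h (m i) = (e i).1 ∧ v i ∈ γ' (m i) := ⟨hi, hhm hi, hvγ⟩
      have hmeq : m (i+1) = Classical.choose (key i hc.1 (m i) hc.2.1 hc.2.2) := dif_pos hc
      obtain ⟨_, hh, hv⟩ := Classical.choose_spec (key i hc.1 (m i) hc.2.1 hc.2.2)
      refine ⟨by rw [hmeq]; exact hv, fun hi' => ?_⟩
      rw [hmeq, hh]; exact hpath.2.2 i hi'
  have edge : ∀ i < n, (m i, (e i).2.1, m (i + 1)) ∈ M.E ∧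
      h (m i) = (e i).1 ∧ h (m (i + 1)) = (e i).2.2 := by
    intro i hi
    obtain ⟨hvγ, hhm⟩ := inv i (le_of_lt hi)
    have hc : i < n ∧ h (m i) = (e i).1 ∧ v i ∈ γ' (m i) := ⟨hi, hhm hi, hvγ⟩
    have hmeq : m (i+1) = Classical.choose (key i hc.1 (m i) hc.2.1 hc.2.2) := dif_pos hc
    obtain ⟨hE, hh, _⟩ := Classical.choose_spec (key i hc.1 (m i) hc.2.1 hc.2.2)
    exact ⟨by rw [hmeq]; exact hE, hhm hi, by rw [hmeq]; exact hh⟩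
  refine ⟨m, rfl, edge, fun i hi => (inv i hi).1, ?_⟩
  exact ⟨fun i hi => (edge i hi).1, fun _ => rfl, fun i _ => rfl⟩
end

section
/- Let (M, h, γ') be a monitor abstraction of a program P = (ℓI, E). If a transition e = (ℓ, τ, ℓ') ∈ E is such that there is no transition (m, τ, m') of M with h(m) = ℓ and h(m') = ℓ', then no feasible path of P contains e. (This is how the model checker proves test goals unreachable: goals not reached by any transition of the abstract reachability graph are unreachable in the program.) -/
/-- A goal transition not reached by any monitor transition is unreachable:
no feasible path of the program contains it. -/
theorem goal_unreached_in_monitor_is_unreachable {Loc Loc' Val : Type*}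
    (P : Program Loc Val) (M : Program Loc' Val)
    (h : Loc' → Loc) (γ' : Loc' → Set Val) (hmon : IsMonitorAbs P M h γ')
    (ℓ ℓ' : Loc) (τ : Val → Val → Prop) (he : (ℓ, τ, ℓ') ∈ P.E)
    (hno : ¬ ∃ m m' : Loc', (m, τ, m') ∈ M.E ∧ h m = ℓ ∧ h m' = ℓ') :
    ∀ (n : ℕ) (e : ℕ → Loc × (Val → Val → Prop) × Loc) (v : ℕ → Val),
      IsPath P n e → IsExec n e v → ∀ i < n, e i ≠ (ℓ, τ, ℓ') := by
  intro n e v hpath hexec i hi hei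
  obtain ⟨hinit, hγinit, hstep⟩ := hmon
  obtain ⟨hE, h0, hchain⟩ := hpath
  -- invariant: for all j < n, there is m with h m = (e j).1 and v j ∈ γ' m
  have key : ∀ j, j < n → ∃ m : Loc', h m = (e j).1 ∧ v j ∈ γ' m := by
    intro j
    induction j with
    | zero =>
      intro hj
      exact ⟨M.init, by rw [hinit, h0 hj], by rw [hγinit]; trivial⟩
    | succ k ih =>
      intro hj
      obtain ⟨m, hm1, hm2⟩ := ih (Nat.lt_of_succ_lt hj)
      have hek : (h m, (e k).2.1, (e k).2.2) ∈ P.E := by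
        rw [hm1]; exact hE k (Nat.lt_of_succ_lt hj)
      obtain ⟨m', hm'1, hm'2, hm'3⟩ :=
        hstep m (e k).2.1 (e k).2.2 hek (v k) hm2 (v (k+1))
          (hexec k (Nat.lt_of_succ_lt hj))
      exact ⟨m', by rw [hm'2, hchain k hj], hm'3⟩
  obtain ⟨m, hm1, hm2⟩ := key i hi
  have hek : (h m, (e i).2.1, (e i).2.2) ∈ P.E := by
    rw [hm1]; exact hE i hi
  obtain ⟨m', hm'1, hm'2, hm'3⟩ :=
    hstep m (e i).2.1 (e i).2.2 hek (v i) hm2 (v (i+1)) (hexec i hi)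
  apply hno
  refine ⟨m, m', ?_, ?_, ?_⟩ <;> rw [hei] at * <;> simp_all
end

section
/- Abstract infeasibility proofs are sound: let τ₀,…,τ_{n−1} be transition relations, and define A₀ = ∅ and A_{i+1} = sp_a(Aᵢ, τᵢ) for 0 ≤ i < n. If γ(A_n) = ∅, then there is no sequence of valuations v₀,…,v_n with τᵢ(vᵢ, v_{i+1}) for all 0 ≤ i < n; consequently, every path of any program whose transitions carry the relations τ₀,…,τ_{n−1} in this order is infeasible. -/
/-- Abstraction function of predicate abstraction: predicates of `π` implied by `ρ`. -/
def alphaAbs {Val : Type*} (π : Set (Set Val)) (ρ : Set Val) : Set (Set Val) :=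
  {φ ∈ π | ρ ⊆ φ}

/-- Concretization function: intersection of the predicates (with `γ ∅ = Set.univ`). -/
def gammaConc {Val : Type*} (A : Set (Set Val)) : Set Val := ⋂₀ A

/-- Concrete post of `ρ` under a transition relation `τ`. -/
def post {Val : Type*} (ρ : Set Val) (τ : Val → Val → Prop) : Set Val :=
  {v' | ∃ v ∈ ρ, τ v v'}

/-- Abstract strongest post. -/
def spa {Val : Type*} (π : Set (Set Val)) (A : Set (Set Val)) (τ : Val → Val → Prop) :
    Set (Set Val) :=
  alphaAbs π (post (gammaConc A) τ)

/-- Abstract infeasibility proofs are sound: if `γ(A n) = ∅` then there is no execution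
along `τ 0, …, τ (n-1)`, and every path carrying these relations is infeasible. -/
theorem abstract_infeasibility_sound {Val : Type}
    (π : Set (Set Val)) (n : ℕ) (τ : ℕ → Val → Val → Prop)
    (A : ℕ → Set (Set Val)) (hA0 : A 0 = ∅)
    (hAs : ∀ i < n, A (i + 1) = spa π (A i) (τ i))
    (hempty : gammaConc (A n) = ∅) :
    (¬ ∃ v : ℕ → Val, ∀ i < n, τ i (v i) (v (i + 1))) ∧
    ∀ (Loc : Type) (P : Program Loc Val) (e : ℕ → Loc × (Val → Val → Prop) × Loc),
      IsPath P n e → (∀ i < n, (e i).2.1 = τ i) →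
        ¬ ∃ v : ℕ → Val, IsExec n e v := by
  have key : ¬ ∃ v : ℕ → Val, ∀ i < n, τ i (v i) (v (i + 1)) := by
    rintro ⟨v, hv⟩
    have hmem : ∀ i ≤ n, v i ∈ gammaConc (A i) := by
      intro i hi
      induction i with
      | zero =>
        simp [hA0, gammaConc]
      | succ k ih =>
        have hk : k < n := hi
        have hvk : v k ∈ gammaConc (A k) := ih (le_of_lt hk)
        have hpost : v (k + 1) ∈ post (gammaConc (A k)) (τ k) :=
          ⟨v k, hvk, hv k hk⟩
        rw [hAs k hk]
        intro φ hφ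
        exact hφ.2 hpost
    have := hmem n le_rfl
    rw [hempty] at this
    exact this
  refine ⟨key, ?_⟩
  intro Loc P e _ hτ ⟨v, hv⟩
  exact key ⟨v, fun i hi => (hτ i hi) ▸ hv i hi⟩
end

section
/- Refining the abstraction by adding predicates makes it more precise: let π ⊆ π' be two sets of predicates, with α, γ, sp_a the abstraction, concretization and abstract strongest post for π, and α', γ', sp'_a those for π'. Then (a) for every ρ ⊆ Val, γ'(α'(ρ)) ⊆ γ(α(ρ)); and (b) for every sequence of transition relations τ₀,…,τ_{n−1}, defining A₀ = ∅, A_{i+1} = sp_a(Aᵢ, τᵢ) and A'₀ = ∅, A'_{i+1} = sp'_a(A'ᵢ, τᵢ), one has γ'(A'ᵢ) ⊆ γ(Aᵢ) for all 0 ≤ i ≤ n. In particular, every path proved infeasible with predicates π (i.e. γ(A_n) = ∅) is also proved infeasible with predicates π'. -/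

lemma gamma_anti {Val : Type*} {A B : Set (Set Val)} (h : A ⊆ B) :
    gammaConc B ⊆ gammaConc A := fun v hv φ hφ => hv φ (h hφ)

lemma gamma_alpha_mono {Val : Type*} {π π' : Set (Set Val)} (hsub : π ⊆ π')
    {ρ ρ' : Set Val} (h : ρ' ⊆ ρ) :
    gammaConc (alphaAbs π' ρ') ⊆ gammaConc (alphaAbs π ρ) := by
  apply gamma_anti
  intro φ hφ
  exact ⟨hsub hφ.1, h.trans hφ.2⟩

lemma post_mono {Val : Type*} {ρ ρ' : Set Val} (h : ρ' ⊆ ρ) (τ : Val → Val → Prop) :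
    post ρ' τ ⊆ post ρ τ := fun v ⟨w, hw, hτ⟩ => ⟨w, h hw, hτ⟩

/-- Refining the abstraction by adding predicates makes it more precise, both for a single
abstraction step and along iterated abstract posts; in particular infeasibility proofs
are preserved under refinement. -/
theorem refinement_more_precise {Val : Type*}
    (π π' : Set (Set Val)) (hsub : π ⊆ π') :
    (∀ ρ : Set Val, gammaConc (alphaAbs π' ρ) ⊆ gammaConc (alphaAbs π ρ)) ∧
    ∀ (n : ℕ) (τ : ℕ → Val → Val → Prop) (A A' : ℕ → Set (Set Val)),
      A 0 = ∅ → (∀ i < n, A (i + 1) = spa π (A i) (τ i)) →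
      A' 0 = ∅ → (∀ i < n, A' (i + 1) = spa π' (A' i) (τ i)) →
      (∀ i ≤ n, gammaConc (A' i) ⊆ gammaConc (A i)) ∧
      (gammaConc (A n) = ∅ → gammaConc (A' n) = ∅) := by
  have key : ∀ ρ : Set Val, gammaConc (alphaAbs π' ρ) ⊆ gammaConc (alphaAbs π ρ) :=
    fun ρ => gamma_alpha_mono hsub subset_rfl
  refine ⟨key, fun n τ A A' hA0 hAs hA'0 hA's => ?_⟩
  have main : ∀ i ≤ n, gammaConc (A' i) ⊆ gammaConc (A i) := by
    intro i
    induction i with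
    | zero => intro _; rw [hA0, hA'0]
    | succ i ih =>
      intro hin
      have hi : i < n := Nat.lt_of_succ_le hin
      rw [hAs i hi, hA's i hi]
      exact gamma_alpha_mono hsub (post_mono (ih hi.le) (τ i))
  refine ⟨main, fun h => Set.eq_empty_of_subset_empty (h ▸ main n le_rfl)⟩
end

section
/- Every infeasible path can be proved infeasible by a finite refinement: if a sequence of transition relations τ₀,…,τ_{n−1} admits no execution (there is no sequence of valuations v₀,…,v_n with τᵢ(vᵢ, v_{i+1}) for all 0 ≤ i < n), then there exists a finite set π of predicates such that the iterated abstract posts A₀ = ∅, A_{i+1} = sp_a(Aᵢ, τᵢ) satisfy γ(A_n) = ∅. (One may take π to consist of the strongest postconditions S₀ = Val, S_{i+1} = post(Sᵢ, τᵢ) along the path.) -/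
/-- Strongest postconditions along the path. -/
def Spath {Val : Type*} (τ : ℕ → Val → Val → Prop) : ℕ → Set Val
  | 0 => Set.univ
  | i + 1 => post (Spath τ i) (τ i)

lemma Spath_chain {Val : Type*} (τ : ℕ → Val → Val → Prop) :
    ∀ i, ∀ x ∈ Spath τ i, ∃ v : ℕ → Val, v i = x ∧ ∀ j < i, τ j (v j) (v (j + 1)) := by
  intro i
  induction i with
  | zero => intro x _; exact ⟨fun _ => x, rfl, fun j hj => absurd hj (Nat.not_lt_zero j)⟩
  | succ i ih =>
    rintro x ⟨y, hy, hτ⟩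
    obtain ⟨v, hvi, hv⟩ := ih y hy
    refine ⟨fun k => if k ≤ i then v k else x, ?_, ?_⟩
    · simp
    · intro j hj
      rcases Nat.lt_succ_iff_lt_or_eq.mp hj with hj | rfl
      · simp only [Nat.le_of_lt hj, Nat.succ_le_of_lt hj, if_pos]
        exact hv j hj
      · simp [hvi, hτ]

/-- Every infeasible path can be proved infeasible by a finite refinement. -/
theorem infeasible_path_has_finite_refinement {Val : Type*}
    (n : ℕ) (τ : ℕ → Val → Val → Prop)
    (hinf : ¬ ∃ v : ℕ → Val, ∀ i < n, τ i (v i) (v (i + 1))) :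
    ∃ π : Set (Set Val), π.Finite ∧
      ∃ A : ℕ → Set (Set Val), A 0 = ∅ ∧
        (∀ i < n, A (i + 1) = spa π (A i) (τ i)) ∧
        gammaConc (A n) = ∅ := by
  set π : Set (Set Val) := Set.range (fun i : Fin (n + 1) => Spath τ i) with hπ
  have hπfin : π.Finite := Set.finite_range _
  set A : ℕ → Set (Set Val) :=
    fun i => Nat.rec ∅ (fun i Ai => spa π Ai (τ i)) i with hA
  have hA0 : A 0 = ∅ := rfl
  have hAstep : ∀ i, A (i + 1) = spa π (A i) (τ i) := fun i => rfl
  -- S n is empty by infeasibility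
  have hSn : Spath τ n = ∅ := by
    ext x
    simp only [Set.mem_empty_iff_false, iff_false]
    intro hx
    obtain ⟨v, _, hv⟩ := Spath_chain τ n x hx
    exact hinf ⟨v, hv⟩
  -- γ (A i) ⊆ Spath τ i for i ≤ n
  have key : ∀ i ≤ n, gammaConc (A i) ⊆ Spath τ i := by
    intro i
    induction i with
    | zero => intro _; simp [hA0, gammaConc, Spath]
    | succ i ih =>
      intro hin
      have hi : i ≤ n := Nat.le_of_succ_le hin
      have hmem : Spath τ (i + 1) ∈ A (i + 1) := by
        rw [hAstep]
        refine ⟨⟨⟨i + 1, Nat.lt_succ_of_le hin⟩, rfl⟩, ?_⟩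
        rintro x ⟨y, hy, hτ⟩
        exact ⟨y, ih hi hy, hτ⟩
      exact fun x hx => hx _ hmem
  exact ⟨π, hπfin, A, hA0, fun i _ => hAstep i, Set.eq_empty_of_subset_empty
    (hSn ▸ key n le_rfl)⟩
end
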